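/- For every real x with 0 < x ≤ 1/2 one has π·x·(137x + 144)/128 + π·log(1 − 9x/8) > 0, where log is the real natural logarithm (note 1 − 9x/8 > 0 for x ≤ 1/2). -/

import Mathlib

/-!
Substituting `a = 9x/8` turns the claim into `0 < a + 137a²/162 + log (1 - a)` for
`0 < a ≤ 9/16`. Bounding the tail of `-log (1 - a) = ∑ aᵏ/k` from index `n + 1` on by the
geometric series `aⁿ⁺¹/((n + 1)(1 - a))`, the case `n = 5` leaves `a²/(1 - a)` times a quartic
that stays positive on `[0, 9/16]`, with a margin of only about `0.0023` at `a = 9/16`.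
-/

open Real Finset

theorem neg_log_one_sub_le_sum_range_add {x : ℝ} (h₀ : 0 ≤ x) (h₁ : x < 1) (n : ℕ) :
    -log (1 - x) ≤
      ∑ i ∈ range n, x ^ (i + 1) / (i + 1) + x ^ (n + 1) / ((n + 1) * (1 - x)) := by
  have htail := (hasSum_nat_add_iff' n).2 <|
    hasSum_pow_div_log_of_abs_lt_one (abs_lt.2 ⟨by linarith, h₁⟩)
  have hgeom := (hasSum_geometric_of_lt_one h₀ h₁).mul_left (x ^ (n + 1) / (n + 1))
  have hterm (i : ℕ) :
      x ^ (i + n + 1) / ((i + n : ℕ) + 1 : ℝ) ≤ x ^ (n + 1) / (n + 1) * x ^ i := by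
    rw [div_mul_eq_mul_div, ← pow_add, add_comm (n + 1), ← add_assoc]
    gcongr
    simp
  have := hasSum_le hterm htail hgeom
  rw [← div_div, div_eq_mul_inv _ (1 - x)]
  linarith

theorem quartic_pos {a : ℝ} (h₀ : 0 ≤ a) (h : a ≤ 9 / 16) :
    0 < 28 / 81 - 55 * a / 81 + a ^ 2 / 12 + a ^ 3 / 20 + a ^ 4 / 30 := by
  nlinarith [sq_nonneg (a - 9 / 16), sq_nonneg (a ^ 2 - 81 / 256),
    mul_nonneg (mul_nonneg h₀ h₀) (sub_nonneg.mpr h),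
    mul_nonneg (pow_nonneg h₀ 3) (sub_nonneg.mpr h)]

theorem add_log_one_sub_pos {a : ℝ} (h₀ : 0 < a) (h : a ≤ 9 / 16) :
    0 < a + 137 * a ^ 2 / 162 + log (1 - a) := by
  have h₁ : 0 < 1 - a := by linarith
  have hlog := neg_log_one_sub_le_sum_range_add h₀.le (by linarith) 5
  norm_num [sum_range_succ] at hlog
  have hgap : a + 137 * a ^ 2 / 162 -
      (a + a ^ 2 / 2 + a ^ 3 / 3 + a ^ 4 / 4 + a ^ 5 / 5 + a ^ 6 / (6 * (1 - a))) =
      a ^ 2 * (28 / 81 - 55 * a / 81 + a ^ 2 / 12 + a ^ 3 / 20 + a ^ 4 / 30) / (1 - a) := by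
    field_simp
    ring
  have := quartic_pos h₀.le h
  have : 0 < a ^ 2 * (28 / 81 - 55 * a / 81 + a ^ 2 / 12 + a ^ 3 / 20 + a ^ 4 / 30) / (1 - a) := by
    positivity
  linarith

theorem statement18 (x : ℝ) (hx0 : 0 < x) (hx : x ≤ 1 / 2) :
    0 < π * x * (137 * x + 144) / 128 + π * Real.log (1 - 9 * x / 8) := by
  have hsubst : π * x * (137 * x + 144) / 128 + π * Real.log (1 - 9 * x / 8) =
      π * (9 * x / 8 + 137 * (9 * x / 8) ^ 2 / 162 + log (1 - 9 * x / 8)) := by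
    ring
  rw [hsubst]
  exact mul_pos pi_pos (add_log_one_sub_pos (by positivity) (by linarith))
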